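/- arXiv:1303.6225 — 4 statements merged into one kernel-verified Lean document; each statement's English description precedes it below -/
import Mathlib

section
/- Let (M, ω) be a symplectic manifold, H a smooth function, a a real number, and X a vector field with L_X ω = a·ω and X(H) = a·H. Then [X, Γ_H] = 0. -/
/-- Abstract Cartan-calculus formalization of a symplectic manifold
(notation as before; Lie derivatives via Cartan's formula).  If `Γ` is the
Hamiltonian vector field of `H` (`i(Γ)ω = dH`), and the vector field `X` satisfies
`L_X ω = a•ω` and `X(H) = i(X)dH = a•H` for a real number `a`, then `[X, Γ_H] = 0`. -/
theorem statement6
    {V Ω₀ Ω₁ Ω₂ Ω₃ : Type*} [LieRing V] [LieAlgebra ℝ V]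
    [AddCommGroup Ω₀] [Module ℝ Ω₀] [AddCommGroup Ω₁] [Module ℝ Ω₁]
    [AddCommGroup Ω₂] [Module ℝ Ω₂] [AddCommGroup Ω₃] [Module ℝ Ω₃]
    (d₀ : Ω₀ →ₗ[ℝ] Ω₁) (d₁ : Ω₁ →ₗ[ℝ] Ω₂) (d₂ : Ω₂ →ₗ[ℝ] Ω₃)
    (ι₁ : V → Ω₁ →ₗ[ℝ] Ω₀) (ι₂ : V → Ω₂ →ₗ[ℝ] Ω₁) (ι₃ : V → Ω₃ →ₗ[ℝ] Ω₂)
    -- d ∘ d = 0 on functions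
    (hdd : ∀ f : Ω₀, d₁ (d₀ f) = 0)
    -- L_X(i(Y)α) − i(Y)(L_X α) = i([X,Y])α for 2-forms α
    (hcomm : ∀ (X Y : V) (α : Ω₂),
      (ι₂ X (d₁ (ι₂ Y α)) + d₀ (ι₁ X (ι₂ Y α)))
        - ι₂ Y (ι₃ X (d₂ α) + d₁ (ι₂ X α)) = ι₂ ⁅X, Y⁆ α)
    (ω : Ω₂)
    -- nondegeneracy of ω
    (hnd : ∀ Y : V, ι₂ Y ω = 0 → Y = 0)
    (H : Ω₀) (Γ : V)
    -- Γ is the Hamiltonian vector field of H : i(Γ)ω = dH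
    (hΓ : ι₂ Γ ω = d₀ H)
    (a : ℝ) (X : V)
    -- L_X ω = a • ω
    (hXω : ι₃ X (d₂ ω) + d₁ (ι₂ X ω) = a • ω)
    -- X(H) = a • H
    (hXH : ι₁ X (d₀ H) = a • H) :
    ⁅X, Γ⁆ = 0 := by
  apply hnd
  rw [← hcomm X Γ ω, hΓ, hdd, hXω, hXH, map_zero, map_smul, map_smul, hΓ]
  simp
end

section
/- Let (M, ω) be a symplectic manifold and Γ a locally Hamiltonian vector field. For any vector field X, the 1-form i([X,Γ])ω is closed if and only if the 1-form i(Γ)(L_X ω) is closed. Consequently, [X,Γ] is locally Hamiltonian if and only if X is an infinitesimal canonoid transformation for Γ (i.e. L_Γ L_X ω = 0). -/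
/-- Abstract Cartan-calculus formalization of a symplectic manifold
with a locally Hamiltonian vector field `Γ` (`L_Γ ω = 0`, `ω` closed).  For any
vector field `X` (Lie derivatives via Cartan's formula):
(a) the 1-form `i([X,Γ])ω` is closed iff the 1-form `i(Γ)(L_X ω)` is closed;
(b) consequently, `[X,Γ]` is locally Hamiltonian iff `X` is an infinitesimal
    canonoid transformation for `Γ`, i.e. `L_Γ(L_X ω) = 0`. -/
theorem statement14
    {V Ω₀ Ω₁ Ω₂ Ω₃ : Type*} [LieRing V] [LieAlgebra ℝ V]
    [AddCommGroup Ω₀] [Module ℝ Ω₀] [AddCommGroup Ω₁] [Module ℝ Ω₁]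
    [AddCommGroup Ω₂] [Module ℝ Ω₂] [AddCommGroup Ω₃] [Module ℝ Ω₃]
    (d₀ : Ω₀ →ₗ[ℝ] Ω₁) (d₁ : Ω₁ →ₗ[ℝ] Ω₂) (d₂ : Ω₂ →ₗ[ℝ] Ω₃)
    (ι₁ : V → Ω₁ →ₗ[ℝ] Ω₀) (ι₂ : V → Ω₂ →ₗ[ℝ] Ω₁) (ι₃ : V → Ω₃ →ₗ[ℝ] Ω₂)
    -- d ∘ d = 0 on functions and on 1-forms
    (hdd₀ : ∀ f : Ω₀, d₁ (d₀ f) = 0)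
    (hdd₁ : ∀ β : Ω₁, d₂ (d₁ β) = 0)
    -- L_X(i(Y)α) − i(Y)(L_X α) = i([X,Y])α for 2-forms α
    (hcomm : ∀ (X Y : V) (α : Ω₂),
      (ι₂ X (d₁ (ι₂ Y α)) + d₀ (ι₁ X (ι₂ Y α)))
        - ι₂ Y (ι₃ X (d₂ α) + d₁ (ι₂ X α)) = ι₂ ⁅X, Y⁆ α)
    (ω : Ω₂)
    -- ω is closed
    (hdω : d₂ ω = 0)
    (Γ : V)
    -- Γ is locally Hamiltonian : L_Γ ω = 0
    (hLΓω : ι₃ Γ (d₂ ω) + d₁ (ι₂ Γ ω) = 0)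
    (X : V) :
    -- (a) i([X,Γ])ω is closed  ↔  i(Γ)(L_X ω) is closed
    (d₁ (ι₂ ⁅X, Γ⁆ ω) = 0 ↔ d₁ (ι₂ Γ (ι₃ X (d₂ ω) + d₁ (ι₂ X ω))) = 0) ∧
    -- (b) [X,Γ] is locally Hamiltonian  ↔  L_Γ (L_X ω) = 0
    (d₁ (ι₂ ⁅X, Γ⁆ ω) = 0 ↔
      ι₃ Γ (d₂ (ι₃ X (d₂ ω) + d₁ (ι₂ X ω)))
        + d₁ (ι₂ Γ (ι₃ X (d₂ ω) + d₁ (ι₂ X ω))) = 0) := by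
  have h1 : d₁ (ι₂ Γ ω) = 0 := by
    have := hLΓω
    rw [hdω, map_zero, zero_add] at this
    exact this
  have hc := hcomm X Γ ω
  rw [h1, map_zero, zero_add] at hc
  have key : d₁ (ι₂ ⁅X, Γ⁆ ω) = - d₁ (ι₂ Γ (ι₃ X (d₂ ω) + d₁ (ι₂ X ω))) := by
    rw [← hc, map_sub, hdd₀, zero_sub]
  have hdL : d₂ (ι₃ X (d₂ ω) + d₁ (ι₂ X ω)) = 0 := by
    rw [hdω, map_zero, zero_add, hdd₁]
  constructor
  · rw [key]
    constructor <;> intro h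
    · exact (neg_eq_zero).mp h
    · rw [h, neg_zero]
  · rw [key, hdL, map_zero, zero_add]
    constructor <;> intro h
    · exact (neg_eq_zero).mp h
    · rw [h, neg_zero]
end

section
/- Let Γ be a vector field on a manifold M, d_Γ = d∘i(Γ)∘d and ∂_Γ = i(Γ)∘d∘i(Γ). Then on differential forms: d_Γ ∘ i(Γ) + i(Γ) ∘ d_Γ = L_Γ², ∂_Γ ∘ d + d ∘ ∂_Γ = L_Γ², and ∂_Γ ∘ d_Γ + d_Γ ∘ ∂_Γ = L_Γ³. -/
/-! **Statement 17.**  Abstract formalization of the twisted operators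
`d_Γ = d ∘ i(Γ) ∘ d` and `∂_Γ = i(Γ) ∘ d ∘ i(Γ)` on the (ℤ-graded) algebra of
differential forms, where `d k : Ω k → Ω (k+1)` is the exterior derivative and
`ι k : Ω (k+1) → Ω k` is the interior product with the fixed vector field `Γ`;
the Lie derivative is `L_Γ = d ∘ i(Γ) + i(Γ) ∘ d` (Cartan's formula). -/

variable {Ω : ℤ → Type*} [∀ k, AddCommGroup (Ω k)] [∀ k, Module ℝ (Ω k)]

/-- The twisted coboundary operator `d_Γ = d ∘ i(Γ) ∘ d`. -/
def dGamma (d : ∀ k : ℤ, Ω k →ₗ[ℝ] Ω (k + 1)) (ι : ∀ k : ℤ, Ω (k + 1) →ₗ[ℝ] Ω k)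
    (k : ℤ) : Ω k →ₗ[ℝ] Ω (k + 1) :=
  (d k).comp ((ι k).comp (d k))

/-- The twisted boundary operator `∂_Γ = i(Γ) ∘ d ∘ i(Γ)`. -/
def delGamma (d : ∀ k : ℤ, Ω k →ₗ[ℝ] Ω (k + 1)) (ι : ∀ k : ℤ, Ω (k + 1) →ₗ[ℝ] Ω k)
    (k : ℤ) : Ω (k + 1) →ₗ[ℝ] Ω k :=
  (ι k).comp ((d k).comp (ι k))

/-- The Lie derivative `L_Γ = d ∘ i(Γ) + i(Γ) ∘ d` (Cartan's formula). -/
def LGamma (d : ∀ k : ℤ, Ω k →ₗ[ℝ] Ω (k + 1)) (ι : ∀ k : ℤ, Ω (k + 1) →ₗ[ℝ] Ω k)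
    (k : ℤ) : Ω (k + 1) →ₗ[ℝ] Ω (k + 1) :=
  (d k).comp (ι k) + (ι (k + 1)).comp (d (k + 1))

/-- `d_Γ ∘ i(Γ) + i(Γ) ∘ d_Γ = L_Γ²`, `∂_Γ ∘ d + d ∘ ∂_Γ = L_Γ²` and
`∂_Γ ∘ d_Γ + d_Γ ∘ ∂_Γ = L_Γ³`. -/
theorem statement17
    (d : ∀ k : ℤ, Ω k →ₗ[ℝ] Ω (k + 1)) (ι : ∀ k : ℤ, Ω (k + 1) →ₗ[ℝ] Ω k)
    -- d ∘ d = 0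
    (hdd : ∀ (k : ℤ) (α : Ω k), d (k + 1) (d k α) = 0)
    -- i(Γ) ∘ i(Γ) = 0
    (hιι : ∀ (k : ℤ) (α : Ω (k + 1 + 1)), ι k (ι (k + 1) α) = 0) :
    -- d_Γ ∘ i(Γ) + i(Γ) ∘ d_Γ = L_Γ²
    (∀ (k : ℤ) (α : Ω (k + 1)),
      dGamma d ι k (ι k α) + ι (k + 1) (dGamma d ι (k + 1) α)
        = LGamma d ι k (LGamma d ι k α)) ∧
    -- ∂_Γ ∘ d + d ∘ ∂_Γ = L_Γ²
    (∀ (k : ℤ) (α : Ω (k + 1)),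
      delGamma d ι (k + 1) (d (k + 1) α) + d k (delGamma d ι k α)
        = LGamma d ι k (LGamma d ι k α)) ∧
    -- ∂_Γ ∘ d_Γ + d_Γ ∘ ∂_Γ = L_Γ³
    (∀ (k : ℤ) (α : Ω (k + 1)),
      delGamma d ι (k + 1) (dGamma d ι (k + 1) α) + dGamma d ι k (delGamma d ι k α)
        = LGamma d ι k (LGamma d ι k (LGamma d ι k α))) := by
  refine ⟨fun k α => ?_, fun k α => ?_, fun k α => ?_⟩ <;>
    (simp [dGamma, delGamma, LGamma, hdd, hιι]; try exact add_comm _ _)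
end

section
/- Let (M, ω) be a symplectic manifold with Γ locally Hamiltonian. (a) For any smooth function f, the vector field associated to the 1-form d_Γ f (i.e. the Y with i(Y)ω = d_Γ f) equals [Γ, X_f]. (b) For any 1-form β with associated vector field X_β (i(X_β)ω = β), X_β generates a one-parameter family of canonoid transformations for Γ (i.e. L_Γ L_{X_β} ω = 0) if and only if d_Γ β = 0. -/
/-- Abstract Cartan-calculus formalization of a symplectic manifold
with a locally Hamiltonian vector field `Γ` (`L_Γ ω = 0`, `ω` closed), with
`d_Γ = d ∘ i(Γ) ∘ d` the twisted differential.
(a) For a smooth function `f`, the vector field associated to the 1-form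
    `d_Γ f = d(i(Γ)df)` is `[Γ, X_f]`, i.e. `i([Γ, X_f])ω = d_Γ f`.
(b) For a 1-form `β` with associated vector field `X_β` (`i(X_β)ω = β`), `X_β`
    generates a one-parameter family of canonoid transformations for `Γ`, i.e.
    `L_Γ(L_{X_β} ω) = 0`, if and only if `d_Γ β = d(i(Γ)dβ) = 0`. -/
theorem statement19
    {V Ω₀ Ω₁ Ω₂ Ω₃ : Type*} [LieRing V] [LieAlgebra ℝ V]
    [AddCommGroup Ω₀] [Module ℝ Ω₀] [AddCommGroup Ω₁] [Module ℝ Ω₁]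
    [AddCommGroup Ω₂] [Module ℝ Ω₂] [AddCommGroup Ω₃] [Module ℝ Ω₃]
    (d₀ : Ω₀ →ₗ[ℝ] Ω₁) (d₁ : Ω₁ →ₗ[ℝ] Ω₂) (d₂ : Ω₂ →ₗ[ℝ] Ω₃)
    (ι₁ : V → Ω₁ →ₗ[ℝ] Ω₀) (ι₂ : V → Ω₂ →ₗ[ℝ] Ω₁) (ι₃ : V → Ω₃ →ₗ[ℝ] Ω₂)
    (Γ : V)
    -- d ∘ d = 0 on functions and on 1-forms
    (hdd₀ : ∀ g : Ω₀, d₁ (d₀ g) = 0)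
    (hdd₁ : ∀ β : Ω₁, d₂ (d₁ β) = 0)
    -- L_Γ(i(X)α) − i(X)(L_Γ α) = i([Γ,X])α for 2-forms α
    (hcomm : ∀ (X : V) (α : Ω₂),
      (ι₂ Γ (d₁ (ι₂ X α)) + d₀ (ι₁ Γ (ι₂ X α)))
        - ι₂ X (ι₃ Γ (d₂ α) + d₁ (ι₂ Γ α)) = ι₂ ⁅Γ, X⁆ α)
    (ω : Ω₂)
    -- ω is closed
    (hdω : d₂ ω = 0)
    -- Γ is locally Hamiltonian : L_Γ ω = 0
    (hLΓω : ι₃ Γ (d₂ ω) + d₁ (ι₂ Γ ω) = 0) :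
    -- (a) the vector field of the d_Γ-exact 1-form d_Γ f is [Γ, X_f]
    (∀ (f : Ω₀) (Xf : V), ι₂ Xf ω = d₀ f →
      ι₂ ⁅Γ, Xf⁆ ω = d₀ (ι₁ Γ (d₀ f))) ∧
    -- (b) X_β generates canonoid transformations iff d_Γ β = 0
    (∀ (β : Ω₁) (Xβ : V), ι₂ Xβ ω = β →
      (ι₃ Γ (d₂ (ι₃ Xβ (d₂ ω) + d₁ (ι₂ Xβ ω)))
          + d₁ (ι₂ Γ (ι₃ Xβ (d₂ ω) + d₁ (ι₂ Xβ ω))) = 0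
        ↔ d₁ (ι₂ Γ (d₁ β)) = 0)) := by
  constructor
  · intro f Xf hXf
    have h := hcomm Xf ω
    rw [hLΓω, hXf, hdd₀] at h
    simp at h
    rw [← h]
  · intro β Xβ hXβ
    rw [hdω, hXβ]
    simp [hdd₁]
end
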